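/- Suppose G(V,E) satisfies the sufficient condition for parameter f, F is the set of faulty nodes with |F| ≤ f, and consider an execution of the Middle algorithm. Suppose at the end of iteration s the fault-free nodes V∖F are partitioned into nonempty sets R and L such that R propagates to L in l steps. Let x = min_{j∈R} v_j[s]. Then for every fault-free node i ∈ V∖F: v_i[s+l] − μ[s] ≥ α^l·(x − μ[s]). -/

import Mathlib

open Finset Filter

variable {V : Type} [Fintype V] [DecidableEq V]

/-- Incoming neighbors of node `v` in the directed graph with edge set `E`. -/
def NinSet (E : Finset (V × V)) (v : V) : Finset V :=
  Finset.univ.filter (fun u => (u, v) ∈ E)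

/-- `A ⇒ B`: there is a node in `B` with more than 1/3 of its incoming neighbors in `A`. -/
def ImpRel (E : Finset (V × V)) (A B : Finset V) : Prop :=
  ∃ v ∈ B, (NinSet E v).card < 3 * ((NinSet E v) ∩ A).card

/-- `in(A ⇒ B)`: the set of nodes in `B` with more than 1/3 of incoming neighbors in `A`. -/
def inRel (E : Finset (V × V)) (A B : Finset V) : Finset V :=
  B.filter (fun v => (NinSet E v).card < 3 * ((NinSet E v) ∩ A).card)

/-- `A` propagates to `B` in `l` steps. -/
def PropagatesIn (E : Finset (V × V)) (A B : Finset V) (l : ℕ) : Prop :=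
  0 < l ∧ ∃ As Bs : ℕ → Finset V,
    As 0 = A ∧ Bs 0 = B ∧ As l = A ∪ B ∧ Bs l = ∅ ∧
    (∀ τ < l, Bs τ ≠ ∅) ∧
    (∀ τ < l, ImpRel E (As τ) (Bs τ) ∧
      As (τ + 1) = As τ ∪ inRel E (As τ) (Bs τ) ∧
      Bs (τ + 1) = Bs τ \ inRel E (As τ) (Bs τ))

/-- `A` propagates to `B` (in some number of steps). -/
def Propagates (E : Finset (V × V)) (A B : Finset V) : Prop :=
  ∃ l, PropagatesIn E A B l

/-- The sufficient condition for parameter `f`. -/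
def SuffCond (E : Finset (V × V)) (f : ℕ) : Prop :=
  (∀ v : V, 3 * f ≤ (NinSet E v).card) ∧
  (∀ F L C R : Finset V,
    F ∪ L ∪ C ∪ R = Finset.univ →
    Disjoint F L → Disjoint F C → Disjoint F R →
    Disjoint L C → Disjoint L R → Disjoint C R →
    L.Nonempty → R.Nonempty → F.card ≤ f →
    ImpRel E (C ∪ R) L ∨ ImpRel E (L ∪ C) R)

/-- The weight `a_i = 1/(|N_i^-| - 2⌊|N_i^-|/3⌋ + 1)` used in the Middle algorithm. -/
noncomputable def middleWeight (E : Finset (V × V)) (i : V) : ℝ :=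
  (((NinSet E i).card - 2 * ((NinSet E i).card / 3) + 1 : ℕ) : ℝ)⁻¹

/-- `α = min_{i ∈ V} a_i`. -/
noncomputable def alphaMin (E : Finset (V × V)) : ℝ :=
  ⨅ i : V, middleWeight E i

/-- An execution of the Middle algorithm on graph `E` with faulty set `F`. -/
structure MiddleExec (E : Finset (V × V)) (F : Finset V) where
  /-- `state i t` is the state `v_i[t]` (meaningful for fault-free `i`). -/
  state : V → ℕ → ℝ
  /-- `w t i j` is the value node `i` receives from `j ∈ N_i^-` in iteration `t ≥ 1`. -/
  w : ℕ → V → V → ℝ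
  /-- the set `B` at node `i` in iteration `t`. -/
  Bs : ℕ → V → Finset V
  /-- the set `T` at node `i` in iteration `t`. -/
  Ts : ℕ → V → Finset V
  /-- the set `M` at node `i` in iteration `t`. -/
  Ms : ℕ → V → Finset V
  w_honest : ∀ t, 1 ≤ t → ∀ i, i ∉ F → ∀ j ∈ NinSet E i, j ∉ F →
    w t i j = state j (t - 1)
  part_union : ∀ t, 1 ≤ t → ∀ i, i ∉ F → Bs t i ∪ Ts t i ∪ Ms t i = NinSet E i
  disj_BT : ∀ t, 1 ≤ t → ∀ i, i ∉ F → Disjoint (Bs t i) (Ts t i)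
  disj_BM : ∀ t, 1 ≤ t → ∀ i, i ∉ F → Disjoint (Bs t i) (Ms t i)
  disj_TM : ∀ t, 1 ≤ t → ∀ i, i ∉ F → Disjoint (Ts t i) (Ms t i)
  card_B : ∀ t, 1 ≤ t → ∀ i, i ∉ F → (Bs t i).card = (NinSet E i).card / 3
  card_T : ∀ t, 1 ≤ t → ∀ i, i ∉ F → (Ts t i).card = (NinSet E i).card / 3
  le_BM : ∀ t, 1 ≤ t → ∀ i, i ∉ F → ∀ j ∈ Bs t i, ∀ k ∈ Ms t i, w t i j ≤ w t i k
  le_MT : ∀ t, 1 ≤ t → ∀ i, i ∉ F → ∀ j ∈ Ms t i, ∀ k ∈ Ts t i, w t i j ≤ w t i k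
  update : ∀ t, 1 ≤ t → ∀ i, i ∉ F →
    state i t = middleWeight E i * (state i (t - 1) + ∑ j ∈ Ms t i, w t i j)

/-- `U[t]`: the maximum state among fault-free nodes at the end of iteration `t`. -/
noncomputable def Umax {E : Finset (V × V)} {F : Finset V}
    (exec : MiddleExec E F) (t : ℕ) : ℝ :=
  ⨆ i : {i : V // i ∉ F}, exec.state i.1 t

/-- `μ[t]`: the minimum state among fault-free nodes at the end of iteration `t`. -/
noncomputable def muMin {E : Finset (V × V)} {F : Finset V}
    (exec : MiddleExec E F) (t : ℕ) : ℝ :=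
  ⨅ i : {i : V // i ∉ F}, exec.state i.1 t


/-! Each Middle update averages the node's own state with its `|M|` middle values. Since
`|B| = ⌊|N_i^-|/3⌋ ≥ |F|`, every middle value dominates the state of some fault-free node, so a
lower bound `m` on the fault-free states persists, and a node whose own value or one of whose
middle values is at least `m + e` ends up at least `m + a_i e`. A node of `in(A ⇒ B)` has more than
`⌊|N_i^-|/3⌋` senders in `A`, so not all of them are trimmed into `T`. Along the propagation of `R`
to `L`, the nodes reached after `τ` steps therefore stay `α ^ τ (x - μ[s])` above `μ[s]`. -/

lemma Finset.card_mul_add_le_sum {ι K : Type*} [Field K] [LinearOrder K] [IsStrictOrderedRing K]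
    {S : Finset ι} {w : ι → K} {m e : K} (hm : ∀ j ∈ S, m ≤ w j) {k : ι} (hk : k ∈ S)
    (hk' : m + e ≤ w k) : S.card * m + e ≤ ∑ j ∈ S, w j := by
  have h := single_le_sum (f := fun j => w j - m) (fun j hj => sub_nonneg.2 (hm j hj)) hk
  simp only [Finset.sum_sub_distrib, Finset.sum_const, nsmul_eq_mul] at h
  linarith

lemma inRel_subset (E : Finset (V × V)) (A B : Finset V) : inRel E A B ⊆ B :=
  filter_subset _ B

lemma union_inRel_union_sdiff_inRel (E : Finset (V × V)) (A B : Finset V) :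
    (A ∪ inRel E A B) ∪ (B \ inRel E A B) = A ∪ B := by
  rw [union_assoc, union_sdiff_of_subset (inRel_subset E A B)]

lemma alphaMin_nonneg (E : Finset (V × V)) : 0 ≤ alphaMin E :=
  Real.iInf_nonneg fun _ => inv_nonneg.2 (Nat.cast_nonneg _)

lemma alphaMin_le_middleWeight (E : Finset (V × V)) (v : V) : alphaMin E ≤ middleWeight E v :=
  ciInf_le (Finite.bddBelow_range _) v

namespace MiddleExec

variable {E : Finset (V × V)} {F : Finset V} (exec : MiddleExec E F) {t : ℕ} {i : V}

def LowerBound (m : ℝ) (t : ℕ) : Prop := ∀ j, j ∉ F → m ≤ exec.state j t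

lemma lowerBound_muMin (t : ℕ) : exec.LowerBound (muMin exec t) t :=
  fun j hj => ciInf_le (Finite.bddBelow_range _) (⟨j, hj⟩ : {j : V // j ∉ F})

lemma Bs_subset (hi : i ∉ F) : exec.Bs (t + 1) i ⊆ NinSet E i := by
  rw [← exec.part_union _ le_add_self i hi]
  exact subset_union_left.trans subset_union_left

lemma Ms_subset (hi : i ∉ F) : exec.Ms (t + 1) i ⊆ NinSet E i := by
  rw [← exec.part_union _ le_add_self i hi]
  exact subset_union_right

lemma w_eq_state (hi : i ∉ F) {j : V} (hj : j ∈ NinSet E i) (hjF : j ∉ F) :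
    exec.w (t + 1) i j = exec.state j t :=
  exec.w_honest _ le_add_self i hi j hj hjF

lemma card_Ms (hi : i ∉ F) :
    (exec.Ms (t + 1) i).card = (NinSet E i).card - 2 * ((NinSet E i).card / 3) := by
  have hcard := card_union_of_disjoint (disjoint_union_left.2
    ⟨exec.disj_BM (t + 1) le_add_self i hi, exec.disj_TM (t + 1) le_add_self i hi⟩)
  rw [exec.part_union _ le_add_self i hi,
    card_union_of_disjoint (exec.disj_BT _ le_add_self i hi), exec.card_B _ le_add_self i hi,
    exec.card_T _ le_add_self i hi] at hcard
  omega

lemma middleWeight_eq (hi : i ∉ F) :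
    middleWeight E i = ((exec.Ms (t + 1) i).card + 1 : ℝ)⁻¹ := by
  rw [middleWeight, exec.card_Ms hi, Nat.cast_add_one]

lemma Ms_nonempty (hi : i ∉ F) (hN : (NinSet E i).Nonempty) :
    (exec.Ms (t + 1) i).Nonempty := by
  have := exec.card_Ms (t := t) hi
  have := hN.card_pos
  rw [← card_pos]
  omega

/-- Among the `⌊|N_i^-|/3⌋ + 1 > |F|` senders in `B ∪ {k}` one is fault-free, and its value is
at most the value received from `k`. -/
lemma le_w_of_mem_Ms (hdeg : 3 * F.card ≤ (NinSet E i).card) (hi : i ∉ F) {m : ℝ}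
    (hm : exec.LowerBound m t) {k : V} (hk : k ∈ exec.Ms (t + 1) i) :
    m ≤ exec.w (t + 1) i k := by
  have hkB : k ∉ exec.Bs (t + 1) i := disjoint_right.1 (exec.disj_BM _ le_add_self i hi) hk
  have hcard : F.card < (insert k (exec.Bs (t + 1) i)).card := by
    rw [card_insert_of_notMem hkB, exec.card_B _ le_add_self i hi]
    omega
  obtain ⟨j, hj, hjF⟩ := exists_mem_notMem_of_card_lt_card hcard
  rcases mem_insert.1 hj with rfl | hjB
  · rw [exec.w_eq_state hi (exec.Ms_subset hi hk) hjF]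
    exact hm j hjF
  · calc m ≤ exec.state j t := hm j hjF
      _ = exec.w (t + 1) i j := (exec.w_eq_state hi (exec.Bs_subset hi hjB) hjF).symm
      _ ≤ exec.w (t + 1) i k := exec.le_BM _ le_add_self i hi j hjB k hk

/-- All `|M| + 1` averaged values are at least `m`, and one of them is at least `m + e`. -/
lemma add_middleWeight_mul_le_state (hdeg : 3 * F.card ≤ (NinSet E i).card) (hi : i ∉ F)
    {m e : ℝ} (hm : exec.LowerBound m t)
    (hgood : m + e ≤ exec.state i t ∨ ∃ k ∈ exec.Ms (t + 1) i, m + e ≤ exec.w (t + 1) i k) :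
    m + middleWeight E i * e ≤ exec.state i (t + 1) := by
  set M := exec.Ms (t + 1) i
  have hwM : ∀ k ∈ M, m ≤ exec.w (t + 1) i k := fun _ hk => exec.le_w_of_mem_Ms hdeg hi hm hk
  have hsum : (M.card + 1 : ℝ) * m + e ≤ exec.state i t + ∑ k ∈ M, exec.w (t + 1) i k := by
    rcases hgood with hself | ⟨k, hk, hk'⟩
    · have := card_nsmul_le_sum M (exec.w (t + 1) i) m hwM
      rw [nsmul_eq_mul] at this
      linarith
    · have := card_mul_add_le_sum hwM hk hk'
      linarith [hm i hi]
  have hpos : (0 : ℝ) < M.card + 1 := by positivity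
  rw [exec.update _ le_add_self i hi, exec.middleWeight_eq hi, Nat.add_sub_cancel]
  calc m + (M.card + 1 : ℝ)⁻¹ * e = (M.card + 1 : ℝ)⁻¹ * ((M.card + 1) * m + e) := by field_simp
    _ ≤ _ := mul_le_mul_of_nonneg_left hsum (inv_nonneg.2 hpos.le)

lemma LowerBound.succ (hdeg : ∀ v, 3 * F.card ≤ (NinSet E v).card) {m : ℝ}
    (hm : exec.LowerBound m t) : exec.LowerBound m (t + 1) := fun j hj => by
  simpa using exec.add_middleWeight_mul_le_state (hdeg j) hj hm (e := 0)
    (.inl (by simpa using hm j hj))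

lemma LowerBound.add (hdeg : ∀ v, 3 * F.card ≤ (NinSet E v).card) {m : ℝ}
    (hm : exec.LowerBound m t) (τ : ℕ) : exec.LowerBound m (t + τ) := by
  induction τ with
  | zero => exact hm
  | succ τ ih => exact LowerBound.succ exec hdeg ih

/-- More than a third of `N_i^-` lies in `A`, so some sender in `A` escapes the `⌊|N_i^-|/3⌋`
discarded largest values. -/
lemma exists_mem_Ms_le_w_of_mem_inRel (hi : i ∉ F) {A B : Finset V} (hiA : i ∈ inRel E A B)
    {c : ℝ} (hA : ∀ k ∈ A, k ∉ F ∧ c ≤ exec.state k t) :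
    ∃ k ∈ exec.Ms (t + 1) i, c ≤ exec.w (t + 1) i k := by
  have hmaj := (mem_filter.1 hiA).2
  have hcard : (exec.Ts (t + 1) i).card < (NinSet E i ∩ A).card := by
    rw [exec.card_T _ le_add_self i hi]
    omega
  obtain ⟨k, hkNA, hkT⟩ := exists_mem_notMem_of_card_lt_card hcard
  obtain ⟨hkN, hkA⟩ := mem_inter.1 hkNA
  obtain ⟨hkF, hck⟩ := hA k hkA
  rw [← exec.w_eq_state hi hkN hkF] at hck
  have hkBM : k ∈ exec.Bs (t + 1) i ∪ exec.Ts (t + 1) i ∪ exec.Ms (t + 1) i :=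
    (exec.part_union _ le_add_self i hi).symm ▸ hkN
  rcases mem_union.1 hkBM with hkBT | hkM
  · have hkB : k ∈ exec.Bs (t + 1) i := (mem_union.1 hkBT).resolve_right hkT
    obtain ⟨k', hk'⟩ := exec.Ms_nonempty hi ⟨k, hkN⟩
    exact ⟨k', hk', hck.trans (exec.le_BM _ le_add_self i hi k hkB k' hk')⟩
  · exact ⟨k, hkM, hck⟩

lemma le_state_of_mem_union_inRel (hdeg : ∀ v, 3 * F.card ≤ (NinSet E v).card) {m e : ℝ}
    (hm : exec.LowerBound m t) {A B : Finset V} (hA : ∀ k ∈ A, k ∉ F ∧ m + e ≤ exec.state k t)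
    (hi : i ∉ F) (hiA : i ∈ A ∪ inRel E A B) :
    m + middleWeight E i * e ≤ exec.state i (t + 1) := by
  refine exec.add_middleWeight_mul_le_state (hdeg i) hi hm ?_
  rcases mem_union.1 hiA with hiA | hiA
  · exact .inl (hA i hiA).2
  · exact .inr (exec.exists_mem_Ms_le_w_of_mem_inRel hi hiA hA)

/-- Along the propagation sequence `A_τ ∪ B_τ = R ∪ L` stays fixed, and every node of `A_τ` has
covered at least the fraction `α ^ τ` of the way from `m` up to `x`. -/
lemma le_state_of_propagatesIn (hdeg : ∀ v, 3 * F.card ≤ (NinSet E v).card)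
    {R L : Finset V} {s l : ℕ} (hprop : PropagatesIn E R L l)
    (hRL : ∀ j ∈ R ∪ L, j ∉ F) {m x : ℝ} (hm : exec.LowerBound m s)
    (hx : ∀ j ∈ R, x ≤ exec.state j s) (hmx : m ≤ x)
    {α : ℝ} (hα0 : 0 ≤ α) (hα : ∀ v, α ≤ middleWeight E v) :
    ∀ j ∈ R ∪ L, m + α ^ l * (x - m) ≤ exec.state j (s + l) := by
  obtain ⟨-, As, Bs, hA0, hB0, hAl, -, -, hstep⟩ := hprop
  have key : ∀ τ ≤ l, As τ ∪ Bs τ = R ∪ L ∧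
      ∀ j ∈ As τ, m + α ^ τ * (x - m) ≤ exec.state j (s + τ) := by
    intro τ
    induction τ with
    | zero =>
      refine fun _ => ⟨by rw [hA0, hB0], fun j hj => ?_⟩
      simpa using hx j (hA0 ▸ hj)
    | succ τ ih =>
      intro hτ
      obtain ⟨hunion, hbound⟩ := ih (Nat.le_of_succ_le hτ)
      obtain ⟨-, hAs, hBs⟩ := hstep τ hτ
      have hunion' : As (τ + 1) ∪ Bs (τ + 1) = R ∪ L := by
        rw [hAs, hBs, union_inRel_union_sdiff_inRel, hunion]
      refine ⟨hunion', fun j hj => ?_⟩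
      have hjF : j ∉ F := hRL j (hunion' ▸ mem_union_left _ hj)
      have hA : ∀ k ∈ As τ, k ∉ F ∧ m + α ^ τ * (x - m) ≤ exec.state k (s + τ) :=
        fun k hk => ⟨hRL k (hunion ▸ mem_union_left _ hk), hbound k hk⟩
      have he : 0 ≤ α ^ τ * (x - m) := mul_nonneg (pow_nonneg hα0 τ) (sub_nonneg.2 hmx)
      calc m + α ^ (τ + 1) * (x - m) = m + α * (α ^ τ * (x - m)) := by ring
        _ ≤ m + middleWeight E j * (α ^ τ * (x - m)) := by gcongr; exact hα j
        _ ≤ exec.state j (s + τ + 1) := exec.le_state_of_mem_union_inRel hdeg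
            (LowerBound.add exec hdeg hm τ) hA hjF (hAs ▸ hj)
  exact fun j hj => (key l le_rfl).2 j (hAl ▸ hj)

end MiddleExec

theorem all_nodes_lower_bound_general
    (E : Finset (V × V)) (f : ℕ)
    (hsuff : SuffCond E f)
    (F : Finset V) (hF : F.card ≤ f)
    (exec : MiddleExec E F)
    (s l : ℕ) (R L : Finset V)
    (hpart : R ∪ L = Finset.univ \ F)
    (hRne : R.Nonempty)
    (hprop : PropagatesIn E R L l) :
    ∀ i : V, i ∉ F →
      exec.state i (s + l) - muMin exec s ≥
        alphaMin E ^ l * ((⨅ j : {j : V // j ∈ R}, exec.state j.1 s) - muMin exec s) := by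
  intro i hi
  have hdeg : ∀ v, 3 * F.card ≤ (NinSet E v).card := fun v => by linarith [hsuff.1 v]
  have hRL : ∀ j ∈ R ∪ L, j ∉ F := fun j hj => (mem_sdiff.1 (hpart ▸ hj)).2
  have hx : ∀ j ∈ R, (⨅ j : {j : V // j ∈ R}, exec.state j.1 s) ≤ exec.state j s :=
    fun j hj => ciInf_le (Finite.bddBelow_range _) (⟨j, hj⟩ : {j : V // j ∈ R})
  have : Nonempty {j : V // j ∈ R} := hRne.to_subtype
  have hmx : muMin exec s ≤ ⨅ j : {j : V // j ∈ R}, exec.state j.1 s :=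
    le_ciInf fun j => exec.lowerBound_muMin s j (hRL j (mem_union_left L j.2))
  have hiRL : i ∈ R ∪ L := hpart ▸ mem_sdiff.2 ⟨mem_univ i, hi⟩
  have := exec.le_state_of_propagatesIn hdeg hprop hRL (exec.lowerBound_muMin s) hx hmx
    (alphaMin_nonneg E) (alphaMin_le_middleWeight E) i hiRL
  linarith

/-- Claim 2, lower bound for all fault-free nodes after `l` iterations. -/
theorem all_nodes_lower_bound
    (E : Finset (V × V)) (f : ℕ)
    (hn : 2 ≤ Fintype.card V)
    (hloop : ∀ v : V, (v, v) ∉ E)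
    (hsuff : SuffCond E f)
    (F : Finset V) (hF : F.card ≤ f)
    (exec : MiddleExec E F)
    (s l : ℕ) (R L : Finset V)
    (hpart : R ∪ L = Finset.univ \ F) (hdisj : Disjoint R L)
    (hRne : R.Nonempty) (hLne : L.Nonempty)
    (hprop : PropagatesIn E R L l) :
    ∀ i : V, i ∉ F →
      exec.state i (s + l) - muMin exec s ≥
        alphaMin E ^ l * ((⨅ j : {j : V // j ∈ R}, exec.state j.1 s) - muMin exec s) :=
  all_nodes_lower_bound_general E f hsuff F hF exec s l R L hpart hRne hprop
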